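/- For every integer s ≥ 2, the embedded weight vector b̃₂ = ((s+1)/s², 1/s, …, 1/s, (s−1)/s²)ᵀ ∈ ℝ^s (first entry (s+1)/s², entries 2 through s−1 equal 1/s, last entry (s−1)/s²), paired with the SSPERK(s,2) abscissae c_j = (j−1)/(s−1), satisfies the first-order condition Σ_{j=1}^{s} (b̃₂)_j = 1 but violates the second-order condition: Σ_{j=1}^{s} (b̃₂)_j c_j = (s²−2)/(2s²) ≠ 1/2. Hence b̃₂ is a non-defective first-order embedded method for SSPERK(s,2). -/

import Mathlib

/-!
`b̃₂` is the uniform weight vector `1/s` with mass `1/s²` moved from the last node (`c = 1`) to the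
first (`c = 0`). The move preserves `∑ b̃ⱼ = 1` and lowers `∑ b̃ⱼ cⱼ` from the uniform value
`(1/s) ∑ cⱼ = 1/2` by `1/s²`.
-/

open Finset

theorem Fin.sum_val_cast_real (n : ℕ) : ∑ j : Fin n, (j : ℝ) = n * (n - 1) / 2 := by
  induction n with
  | zero => simp
  | succ n ih =>
    rw [Fin.sum_univ_castSucc]
    simp only [Fin.val_castSucc, Fin.val_last, ih]
    push_cast
    ring

theorem Fin.sum_ite_val_eq {M : Type*} [AddCommMonoid M] {n k : ℕ} (hk : k < n)
    (f : Fin n → M) : ∑ j : Fin n, (if (j : ℕ) = k then f j else 0) = f ⟨k, hk⟩ := by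
  simp_rw [← Fin.ext_iff (b := ⟨k, hk⟩)]
  exact (sum_ite_eq' _ _ _).trans (if_pos (mem_univ _))

theorem sum_val_div_sub_one {s : ℕ} (hs : s ≠ 1) :
    ∑ j : Fin s, (j : ℝ) / ((s : ℝ) - 1) = s / 2 := by
  have hs' : (s : ℝ) - 1 ≠ 0 := sub_ne_zero.2 (by exact_mod_cast hs)
  rw [← sum_div, Fin.sum_val_cast_real]
  field_simp

noncomputable def ssperkEmbeddedWeight (s : ℕ) (j : Fin s) : ℝ :=
  if (j : ℕ) = 0 then ((s : ℝ) + 1) / (s : ℝ) ^ 2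
  else if (j : ℕ) = s - 1 then ((s : ℝ) - 1) / (s : ℝ) ^ 2
  else 1 / (s : ℝ)

theorem ssperkEmbeddedWeight_eq {s : ℕ} (hs : s ≠ 1) (j : Fin s) :
    ssperkEmbeddedWeight s j = 1 / (s : ℝ) + (if (j : ℕ) = 0 then 1 / (s : ℝ) ^ 2 else 0)
      - (if (j : ℕ) = s - 1 then 1 / (s : ℝ) ^ 2 else 0) := by
  have hs0 : (s : ℝ) ≠ 0 := by exact_mod_cast j.pos.ne'
  have hj := j.isLt
  unfold ssperkEmbeddedWeight
  split_ifs <;> first | omega | (field_simp; ring)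

theorem sum_ssperkEmbeddedWeight_mul {s : ℕ} (hs : 1 < s) (f : Fin s → ℝ) :
    ∑ j, ssperkEmbeddedWeight s j * f j
      = (∑ j, f j) / s + (f ⟨0, by omega⟩ - f ⟨s - 1, by omega⟩) / (s : ℝ) ^ 2 := by
  simp_rw [ssperkEmbeddedWeight_eq hs.ne', sub_mul, add_mul, ite_mul, zero_mul, sum_sub_distrib,
    sum_add_distrib, ← mul_sum]
  rw [Fin.sum_ite_val_eq (by omega), Fin.sum_ite_val_eq (by omega)]
  ring

/-- The embedded weight vector `b̃₂ = ((s+1)/s², 1/s, …, 1/s, (s-1)/s²)ᵀ` for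
SSPERK(s,2), with abscissae `c j = j/(s-1)` (zero-indexed), satisfies the
first-order condition `b̃₂ᵀe = 1` but violates the second-order condition:
`b̃₂ᵀc = (s²-2)/(2s²) ≠ 1/2`. -/
theorem ssperk_s2_embedded_b2_nondefective_first_order
    (s : ℕ) (hs : 2 ≤ s)
    (bt : Fin s → ℝ)
    (hbt : ∀ j : Fin s, bt j =
      if (j : ℕ) = 0 then ((s : ℝ) + 1) / (s : ℝ) ^ 2
      else if (j : ℕ) = s - 1 then ((s : ℝ) - 1) / (s : ℝ) ^ 2
      else 1 / (s : ℝ))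
    (c : Fin s → ℝ) (hc : ∀ j : Fin s, c j = (j : ℝ) / ((s : ℝ) - 1)) :
    (∑ j : Fin s, bt j = 1) ∧
    (∑ j : Fin s, bt j * c j = ((s : ℝ) ^ 2 - 2) / (2 * (s : ℝ) ^ 2)) ∧
    ((s : ℝ) ^ 2 - 2) / (2 * (s : ℝ) ^ 2) ≠ 1 / 2 := by
  obtain rfl : bt = ssperkEmbeddedWeight s := funext hbt
  obtain rfl : c = fun j : Fin s => (j : ℝ) / ((s : ℝ) - 1) := funext hc
  have hs0 : (s : ℝ) ≠ 0 := by positivity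
  have hs1 : (s : ℝ) - 1 ≠ 0 := by
    rw [sub_ne_zero]; exact_mod_cast (show s ≠ 1 by omega)
  refine ⟨?_, ?_, ?_⟩
  · simpa [hs0] using sum_ssperkEmbeddedWeight_mul hs (fun _ => 1)
  · rw [sum_ssperkEmbeddedWeight_mul hs, sum_val_div_sub_one (by omega)]
    simp only [Nat.cast_zero, zero_div, Nat.cast_pred (by omega : 0 < s), div_self hs1]
    field_simp
    ring
  · intro h
    rw [div_eq_div_iff (by positivity) two_ne_zero] at h
    linarith
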